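/- Let β ∈ [1/2, ln 2] and define B(t) = t · (log₂(1/t))^β for t ∈ (0, 1/2], with B(0) := 0. Then for all real numbers x, y with 0 ≤ x ≤ y ≤ 1/2, one has ((y − x)^{1/β} + B(x)^{1/β})^β + B(y) ≥ 2·B((x + y)/2). -/

import Mathlib

/-- `B(t) = t (log₂(1/t))^β`; note that this formula automatically gives `B(0) = 0`,
since in Lean `1/0 = 0`, `log₂ 0 = 0` and `0^β = 0` for `β ≠ 0`. -/
noncomputable def Blog (β t : ℝ) : ℝ := t * (Real.logb 2 (1 / t)) ^ β

namespace TwoPointAux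

open Real

noncomputable def uu (t : ℝ) : ℝ := -Real.log t / Real.log 2

noncomputable def Wf (p t : ℝ) : ℝ := t ^ p * uu t

lemma uu_ge_one {t : ℝ} (ht : 0 < t) (ht2 : t ≤ 1/2) : 1 ≤ uu t := by
  have l2p : (0:ℝ) < Real.log 2 := Real.log_pos one_lt_two
  have h1 : Real.log t ≤ Real.log (1/2) := Real.log_le_log ht ht2
  have h2 : Real.log (1/2 : ℝ) = -Real.log 2 := by
    rw [one_div, Real.log_inv]
  rw [uu, le_div_iff₀ l2p]
  rw [h2] at h1; linarith

lemma hasDerivAt_uu {t : ℝ} (ht : 0 < t) :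
    HasDerivAt uu (-(1 / (t * Real.log 2))) t := by
  have h := ((Real.hasDerivAt_log (ne_of_gt ht)).neg).div_const (Real.log 2)
  refine h.congr_deriv ?_
  field_simp

lemma hasDerivAt_Blog {β t : ℝ} (ht : 0 < t) (ht1 : t < 1) (hβ : 0 < β) :
    HasDerivAt (fun t => t * (uu t) ^ β)
      ((uu t) ^ β - β / Real.log 2 * (uu t) ^ (β - 1)) t := by
  have l2p : (0:ℝ) < Real.log 2 := Real.log_pos one_lt_two
  have hu0 : 0 < uu t := by
    have : Real.log t < 0 := Real.log_neg ht ht1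
    rw [uu]; exact div_pos (by linarith) l2p
  have h1 : HasDerivAt (fun t => (uu t) ^ β)
      (-(1 / (t * Real.log 2)) * β * (uu t) ^ (β - 1)) t :=
    (hasDerivAt_uu ht).rpow_const (Or.inl (ne_of_gt hu0))
  have h2 := (hasDerivAt_id t).mul h1
  refine h2.congr_deriv ?_
  field_simp
  simp only [id]
  ring

lemma hasDerivAt_Wf {p t : ℝ} (ht : 0 < t) (hp : 1 ≤ p) :
    HasDerivAt (Wf p) (t ^ (p-1) * (p * uu t - 1 / Real.log 2)) t := by
  have l2p : (0:ℝ) < Real.log 2 := Real.log_pos one_lt_two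
  have h1 : HasDerivAt (fun x : ℝ => x ^ p) (p * t ^ (p-1)) t :=
    Real.hasDerivAt_rpow_const (Or.inl (ne_of_gt ht))
  have h2 := h1.mul (hasDerivAt_uu ht)
  have h3 : t ^ p = t ^ (p-1) * t := by
    rw [← Real.rpow_add_one (ne_of_gt ht) (p-1)]; ring_nf
  unfold Wf
  refine h2.congr_deriv ?_
  rw [h3]
  field_simp
  ring

lemma Blog_u (β t : ℝ) : Blog β t = t * (uu t) ^ β := by
  simp [Blog, uu, Real.logb, Real.log_inv, one_div, neg_div]

lemma Blog_nonneg {β t : ℝ} (h0 : 0 ≤ t) (h2 : t ≤ 1/2) (hβ : β ≠ 0) : 0 ≤ Blog β t := by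
  rcases eq_or_lt_of_le h0 with h | h
  · simp [Blog, ← h]
  · rw [Blog_u]
    have h1 : (0:ℝ) ≤ uu t := le_trans zero_le_one (uu_ge_one h h2)
    exact mul_nonneg h.le (Real.rpow_nonneg h1 β)

lemma add_one_rpow_le {a β : ℝ} (ha : 0 ≤ a) (hb0 : 0 ≤ β) (hb1 : β ≤ 1) :
    (a+1) ^ β ≤ a ^ β + 1 := by
  have h := NNReal.rpow_add_le_add_rpow a.toNNReal 1 hb0 hb1
  have h2 := NNReal.coe_le_coe.mpr h
  push_cast [NNReal.coe_rpow] at h2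
  rw [Real.coe_toNNReal a ha] at h2
  simpa using h2

lemma C4 {Δ q : ℝ} (hΔ : 0 < Δ) (hq0 : (1 - Real.log 2)/Real.log 2 ≤ q) (hq1 : q ≤ 1) :
    Δ ≤ 2 * ((2:ℝ) ^ Δ - 1) ^ q := by
  have l2p : (0:ℝ) < Real.log 2 := Real.log_pos one_lt_two
  have l2u : Real.log 2 < 0.6931471808 := Real.log_two_lt_d9
  have l2l : 0.6931471803 < Real.log 2 := Real.log_two_gt_d9
  have h2d : (2:ℝ) ^ Δ = Real.exp (Δ * Real.log 2) := by
    rw [Real.rpow_def_of_pos (by norm_num), mul_comm]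
  have hqpos : 0 < q := lt_of_lt_of_le (div_pos (by linarith) l2p) hq0
  have hbase : Δ * Real.log 2 ≤ (2:ℝ)^Δ - 1 := by
    rw [h2d]; linarith [Real.add_one_le_exp (Δ * Real.log 2)]
  rcases le_or_gt (Δ * Real.log 2) 1 with hsm | hlg
  · -- small case
    have ht0 : 0 < Δ * Real.log 2 := by positivity
    have h6 : Δ * Real.log 2 ≤ ((2:ℝ)^Δ - 1) ^ q := by
      calc Δ * Real.log 2 = (Δ * Real.log 2) ^ (1:ℝ) := (Real.rpow_one _).symm
        _ ≤ (Δ * Real.log 2) ^ q := Real.rpow_le_rpow_of_exponent_ge ht0 hsm hq1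
        _ ≤ ((2:ℝ)^Δ - 1) ^ q := Real.rpow_le_rpow ht0.le hbase hqpos.le
    have h7 : Δ ≤ 2 * (Δ * Real.log 2) := by nlinarith
    linarith only [h6, h7]
  · -- large case: Δ > 1/log 2 > 1
    have hΔ1 : 1 < Δ := by nlinarith
    have hpow1 : (1:ℝ) ≤ (2:ℝ) ^ (Δ - 1) := Real.one_le_rpow one_le_two (by linarith)
    have hsplit : (2:ℝ) ^ (Δ - 1) ≤ (2:ℝ) ^ Δ - 1 := by
      have h2e : (2:ℝ) ^ Δ = (2:ℝ) ^ (Δ - 1) * 2 := by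
        rw [← Real.rpow_add_one (by norm_num : (2:ℝ) ≠ 0) (Δ - 1)]; ring_nf
      rw [h2e]; linarith
    set q0 : ℝ := (1 - Real.log 2)/Real.log 2 with hq0def
    have hq00 : 0 < q0 := div_pos (by linarith) l2p
    have h4 : ((2:ℝ)^(Δ-1)) ^ q0 ≤ ((2:ℝ)^Δ - 1) ^ q :=
      calc ((2:ℝ)^(Δ-1)) ^ q0 ≤ ((2:ℝ)^(Δ-1)) ^ q :=
            Real.rpow_le_rpow_of_exponent_le hpow1 hq0
        _ ≤ ((2:ℝ)^Δ - 1) ^ q := Real.rpow_le_rpow (by positivity) hsplit hqpos.le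
    have h5 : ((2:ℝ)^(Δ-1)) ^ q0 = Real.exp ((Δ-1) * (1 - Real.log 2)) := by
      rw [← Real.rpow_mul (by norm_num : (0:ℝ) ≤ 2), Real.rpow_def_of_pos (by norm_num)]
      congr 1
      rw [hq0def]; field_simp
    -- final one-variable bound : Δ ≤ 2 exp ((Δ-1)(1-log 2))
    have hc : (0:ℝ) < 1 - Real.log 2 := by linarith
    have hlog1 : Real.log (Δ * (1 - Real.log 2)) ≤ Δ * (1 - Real.log 2) - 1 :=
      Real.log_le_sub_one_of_pos (by positivity)
    have hlog2 : Real.log (Δ * (1 - Real.log 2)) = Real.log Δ + Real.log (1 - Real.log 2) :=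
      Real.log_mul (ne_of_gt hΔ) (ne_of_gt hc)
    have hquarter : Real.log (1/4 : ℝ) ≤ Real.log (1 - Real.log 2) :=
      Real.log_le_log (by norm_num) (by linarith)
    have hquarter' : Real.log (1/4 : ℝ) = -(2 * Real.log 2) := by
      rw [show (1/4 : ℝ) = ((2:ℝ)^(2:ℕ))⁻¹ by norm_num, Real.log_inv, Real.log_pow]
      push_cast; ring
    have hfin : Real.log Δ ≤ Real.log 2 + (Δ-1) * (1 - Real.log 2) := by
      rw [hquarter'] at hquarter
      linarith
    have : Δ ≤ Real.exp (Real.log 2 + (Δ-1) * (1 - Real.log 2)) :=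
      (Real.log_le_iff_le_exp hΔ).mp hfin
    rw [Real.exp_add, Real.exp_log (by norm_num : (0:ℝ) < 2)] at this
    calc Δ ≤ 2 * Real.exp ((Δ-1) * (1 - Real.log 2)) := this
      _ = 2 * ((2:ℝ)^(Δ-1)) ^ q0 := by rw [h5]
      _ ≤ 2 * ((2:ℝ)^Δ - 1) ^ q := by linarith only [h4]

lemma core {β a A : ℝ} (hβ1 : 1/2 ≤ β) (hβ2 : β ≤ Real.log 2) (ha : 1 ≤ a) (haA : a < A) :
    A ^ (1-β) * ((A ^ β - β/Real.log 2 * A ^ (β-1)) - (a ^ β - β/Real.log 2 * a ^ (β-1)))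
      ≤ 2 * ((2:ℝ) ^ (A-a) - 1) ^ (1/β - 1) := by
  have l2p : (0:ℝ) < Real.log 2 := Real.log_pos one_lt_two
  have l2u : Real.log 2 < 0.6931471808 := Real.log_two_lt_d9
  have hβ0 : 0 < β := by linarith
  have hβlt1 : β < 1 := by linarith
  have ha0 : 0 < a := by linarith
  have hA0 : 0 < A := by linarith
  set c : ℝ := 1 - β with hc
  have hc0 : 0 < c := by simp [hc]; linarith
  have hc1 : c < 1 := by simp [hc]; linarith
  set Δ : ℝ := A - a with hΔdef
  have hΔ0 : 0 < Δ := by simp [hΔdef]; linarith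
  -- identities
  have idA : A ^ c * A ^ β = A := by
    rw [← Real.rpow_add hA0]; simp [hc]
  have idA2 : A ^ c * A ^ (β - 1) = 1 := by
    rw [← Real.rpow_add hA0]
    have hce : c + (β - 1) = 0 := by simp [hc]
    rw [hce, Real.rpow_zero]
  have idA3 : A ^ c * a ^ (β - 1) = (A / a) ^ c := by
    rw [Real.div_rpow hA0.le ha0.le]
    rw [show β - 1 = -c by simp [hc], Real.rpow_neg ha0.le]
    rw [div_eq_mul_inv]
  -- step 3 : A^c * a^β ≥ (1+Δ)^c + (a-1)
  have step3 : (1+Δ) ^ c + (a - 1) ≤ A ^ c * a ^ β := by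
    have hconc := (Real.concaveOn_rpow hc0.le hc1.le).2
      (Set.mem_Ici.mpr (by linarith : (0:ℝ) ≤ 1+Δ)) (Set.mem_Ici.mpr (by norm_num : (0:ℝ) ≤ 1))
      (by positivity : (0:ℝ) ≤ 1/a) (by rw [sub_nonneg]; exact div_le_one_of_le₀ ha (by positivity) : (0:ℝ) ≤ 1 - 1/a)
      (by field_simp; ring)
    simp only [smul_eq_mul, Real.one_rpow, mul_one] at hconc
    have harg : 1/a * (1+Δ) + (1 - 1/a) = 1 + Δ/a := by field_simp; try ring
    rw [harg] at hconc
    -- multiply by a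
    have hmul : a * (1/a * (1+Δ)^c + (1 - 1/a)) = (1+Δ)^c + (a-1) := by field_simp; try ring
    have hABc : A ^ c * a ^ β = a * (1 + Δ/a) ^ c := by
      have hAeq : A = a * (1 + Δ/a) := by field_simp; rw [hΔdef]; ring
      have hsum : a ^ β * a ^ c = a := by
        rw [← Real.rpow_add ha0, show β + c = (1:ℝ) by rw [hc]; ring, Real.rpow_one]
      rw [hAeq, Real.mul_rpow ha0.le (by positivity : (0:ℝ) ≤ 1 + Δ/a)]
      calc (a ^ c * (1 + Δ/a) ^ c) * a ^ β = (a ^ β * a ^ c) * (1 + Δ/a) ^ c := by ring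
        _ = a * (1 + Δ/a) ^ c := by rw [hsum]
    rw [hABc, ← hmul]
    have := mul_le_mul_of_nonneg_left hconc ha0.le
    linarith only [this]
  -- step 2 : (A/a)^c ≤ (1+Δ)^c
  have step2 : (A / a) ^ c ≤ (1+Δ) ^ c := by
    apply Real.rpow_le_rpow (by positivity) _ hc0.le
    rw [div_le_iff₀ ha0]
    nlinarith
  have honele : (1:ℝ) ≤ (1+Δ) ^ c := Real.one_le_rpow (by linarith) hc0.le
  -- combine to LHS ≤ Δ
  have hmain : A ^ c * ((A ^ β - β/Real.log 2 * A ^ (β-1)) - (a ^ β - β/Real.log 2 * a ^ (β-1)))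
      ≤ Δ := by
    have expand : A ^ c * ((A ^ β - β/Real.log 2 * A ^ (β-1)) - (a ^ β - β/Real.log 2 * a ^ (β-1)))
        = (A - A ^ c * a ^ β) + (β/Real.log 2) * ((A/a) ^ c - 1) := by
      linear_combination idA - (β/Real.log 2) * idA2 + (β/Real.log 2) * idA3
    rw [expand]
    have hκ : β / Real.log 2 ≤ 1 := by rw [div_le_one l2p]; exact hβ2
    have hκ0 : 0 < β / Real.log 2 := by positivity
    have ht2 : (A/a)^c - 1 ≤ (1+Δ)^c - 1 := by linarith only [step2]
    have ht2' : (β/Real.log 2) * ((A/a)^c - 1) ≤ (β/Real.log 2) * ((1+Δ)^c - 1) := by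
      apply mul_le_mul_of_nonneg_left ht2 hκ0.le
    have hprod : (1 - β/Real.log 2) * ((1+Δ)^c - 1) ≥ 0 :=
      mul_nonneg (by linarith) (by linarith)
    nlinarith [step3, ht2', hprod, hΔdef]
  -- C4
  have hq0 : (1 - Real.log 2)/Real.log 2 ≤ 1/β - 1 := by
    have h1 : 1/Real.log 2 ≤ 1/β := one_div_le_one_div_of_le hβ0 hβ2
    have h2 : (1 - Real.log 2)/Real.log 2 = 1/Real.log 2 - 1 := by field_simp
    linarith
  have hq1 : 1/β - 1 ≤ 1 := by
    have : 1/β ≤ 2 := by rw [div_le_iff₀ hβ0]; linarith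
    linarith
  calc A ^ c * ((A ^ β - β/Real.log 2 * A ^ (β-1)) - (a ^ β - β/Real.log 2 * a ^ (β-1))) ≤ Δ := hmain
    _ ≤ 2 * ((2:ℝ) ^ Δ - 1) ^ (1/β - 1) := C4 hΔ0 hq0 hq1

lemma key {β p x y S : ℝ} (hβ1 : 1/2 ≤ β) (hβ2 : β ≤ Real.log 2) (hp : p = 1/β)
    (hx : 0 < x) (hxy : x < y) (hy : y ≤ 1/2) (hS : Wf p x ≤ S) :
    0 ≤ (2 * (p * (y-x) ^ (p-1)) - x ^ (p-1) * (p * uu x - 1/Real.log 2)) * β * S ^ (β-1)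
        + ((uu y) ^ β - β/Real.log 2 * (uu y) ^ (β-1)) := by
  have l2p : (0:ℝ) < Real.log 2 := Real.log_pos one_lt_two
  have l2u : Real.log 2 < 0.6931471808 := Real.log_two_lt_d9
  have hβ0 : 0 < β := by linarith
  have hβ1' : β < 1 := by linarith
  have hβp : β * p = 1 := by rw [hp]; field_simp
  have hp1 : 1 ≤ p := by rw [hp]; rw [le_div_iff₀ hβ0]; linarith
  have hy0 : 0 < y := lt_trans hx hxy
  have hux1 : 1 ≤ uu x := uu_ge_one hx (by linarith)
  have huy1 : 1 ≤ uu y := uu_ge_one hy0 hy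
  have hux0 : 0 < uu x := by linarith
  have huy0 : 0 < uu y := by linarith
  have huxy : uu y < uu x := by
    have hll := Real.log_lt_log hx hxy
    rw [uu, uu, div_lt_div_iff₀ l2p l2p]
    exact mul_lt_mul_of_pos_right (by linarith only [hll]) l2p
  have hd0 : 0 < y - x := by linarith
  -- atoms
  set P1 := (uu x) ^ β with hP1
  set P2 := (uu x) ^ (β-1) with hP2
  set U2 := (uu x) ^ (1-β) with hU2
  set Q1 := (uu y) ^ β with hQ1
  set Q2 := (uu y) ^ (β-1) with hQ2
  set X1 := x ^ (p-1) with hX1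
  set X2 := x ^ (1-p) with hX2
  set D1 := (y - x) ^ (p-1) with hD1
  set G := ((2:ℝ) ^ (uu x - uu y) - 1) ^ (p-1) with hG
  set Sb := S ^ (β-1) with hSb
  set Wb := (Wf p x) ^ (β-1) with hWb
  set E := 2 * (p * D1) - X1 * (p * uu x - 1/Real.log 2) with hEdef
  clear_value P1 P2 U2 Q1 Q2 X1 X2 D1 G Sb Wb E
  -- nonneg facts
  have hP2n : 0 ≤ P2 := by rw [hP2]; exact Real.rpow_nonneg hux0.le _
  have hQ2n : 0 ≤ Q2 := by rw [hQ2]; exact Real.rpow_nonneg huy0.le _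
  have hX1n : 0 ≤ X1 := by rw [hX1]; exact Real.rpow_nonneg hx.le _
  have hWfpos : 0 < Wf p x := by
    rw [Wf]; exact mul_pos (Real.rpow_pos_of_pos hx _) hux0
  have hSbn : 0 ≤ Sb := by
    rw [hSb]; exact Real.rpow_nonneg (le_trans hWfpos.le hS) _
  -- identities
  have r1 : X1 * X2 = 1 := by
    rw [hX1, hX2, ← Real.rpow_add hx]; norm_num
  have r2 : P2 * U2 = 1 := by
    rw [hP2, hU2, ← Real.rpow_add hux0]; norm_num
  have r4 : P2 * uu x = P1 := by
    rw [hP2, hP1, ← Real.rpow_add_one (ne_of_gt hux0) (β-1)]; norm_num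
  have r5 : Q2 * uu y = Q1 := by
    rw [hQ2, hQ1, ← Real.rpow_add_one (ne_of_gt huy0) (β-1)]; norm_num
  have r3 : Wb = X2 * P2 := by
    rw [hWb, Wf, Real.mul_rpow (Real.rpow_nonneg hx.le _) hux0.le,
      ← Real.rpow_mul hx.le, hX2, hP2]
    congr 2
    linear_combination hβp
  -- Bpy ≥ 0
  have hBpy : 0 ≤ Q1 - β/Real.log 2 * Q2 := by
    have h1 : β/Real.log 2 * Q2 ≤ 1 * (Q2 * uu y) := by
      have hll : Real.log 2 * 1 ≤ Real.log 2 * uu y := mul_le_mul_of_nonneg_left huy1 l2p.le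
      have : β/Real.log 2 ≤ uu y := by
        rw [div_le_iff₀ l2p]; linarith only [hβ2, hll]
      calc β/Real.log 2 * Q2 = Q2 * (β/Real.log 2) := by ring
        _ ≤ Q2 * uu y := mul_le_mul_of_nonneg_left this hQ2n
        _ = 1 * (Q2 * uu y) := by ring
    rw [← r5]; linarith only [h1]
  -- core consequence : (‡)  (P1 - κP2) - (Q1 - κQ2) ≤ 2*D1*X2*P2
  have hcore : U2 * ((P1 - β/Real.log 2 * P2) - (Q1 - β/Real.log 2 * Q2))
      ≤ 2 * G := by
    have h := core hβ1 hβ2 huy1 huxy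
    rw [show 1/β - 1 = p - 1 by rw [hp]] at h
    rw [hU2, hP1, hP2, hQ1, hQ2, hG]
    exact h
  have hdG : D1 = X1 * G := by
    have h2Δ : (2:ℝ) ^ (uu x - uu y) = y / x := by
      rw [Real.rpow_def_of_pos (by norm_num : (0:ℝ) < 2)]
      rw [show Real.log 2 * (uu x - uu y) = Real.log y - Real.log x by
        rw [uu, uu]; field_simp; ring]
      rw [Real.exp_sub, Real.exp_log hy0, Real.exp_log hx]
    have hdx : y - x = x * ((2:ℝ) ^ (uu x - uu y) - 1) := by
      rw [h2Δ]; field_simp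
    have h1yx : (1:ℝ) ≤ y/x := by rw [le_div_iff₀ hx]; linarith
    have hGe : (0:ℝ) ≤ (2:ℝ)^(uu x - uu y) - 1 := by rw [h2Δ]; linarith only [h1yx]
    rw [hD1, hX1, hG, hdx, Real.mul_rpow hx.le hGe]
  have hdagger : (P1 - β/Real.log 2 * P2) - (Q1 - β/Real.log 2 * Q2) ≤ 2*D1*X2*P2 := by
    have h := mul_le_mul_of_nonneg_left hcore hP2n
    have e1 : (P1 - β/Real.log 2 * P2) - (Q1 - β/Real.log 2 * Q2)
        = P2 * (U2 * ((P1 - β/Real.log 2 * P2) - (Q1 - β/Real.log 2 * Q2))) := by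
      linear_combination (-((P1 - β/Real.log 2 * P2) - (Q1 - β/Real.log 2 * Q2))) * r2
    have e2 : 2*D1*X2*P2 = P2 * (2 * G) := by
      linear_combination 2*X2*P2 * hdG + 2*G*P2 * r1
    rw [e1, e2]
    exact h
  -- case split on sign of E
  rcases le_or_gt 0 E with hE | hE
  · have h0 : 0 ≤ E * β * Sb := mul_nonneg (mul_nonneg hE hβ0.le) hSbn
    exact add_nonneg h0 hBpy
  · -- E < 0
    have hSbW : Sb ≤ Wb := by
      rw [hSb, hWb]
      exact Real.rpow_le_rpow_of_nonpos hWfpos hS (by linarith)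
    have hstep1 : E * β * Wb ≤ E * β * Sb := by
      have hc : E * β ≤ 0 := mul_nonpos_iff.mpr (Or.inr ⟨hE.le, hβ0.le⟩)
      calc E * β * Wb = (E*β) * Wb := by ring
        _ ≤ (E*β) * Sb := mul_le_mul_of_nonpos_left hSbW hc
        _ = E * β * Sb := by ring
    have hid : E * β * Wb = 2*D1*X2*P2 - (P1 - β/Real.log 2 * P2) := by
      calc E * β * Wb = (2 * (p * D1) - X1 * (p * uu x - 1/Real.log 2)) * β * (X2*P2) := by
            rw [← r3, hEdef]
        _ = 2*(β*p)*D1*X2*P2 - (X1*X2)*(β*p*(P2 * uu x) - β/Real.log 2 * P2) := by ring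
        _ = 2*1*D1*X2*P2 - 1*(1*(P1) - β/Real.log 2 * P2) := by rw [hβp, r1, r4]
        _ = 2*D1*X2*P2 - (P1 - β/Real.log 2 * P2) := by ring
    have h2 : 0 ≤ E * β * Wb + (Q1 - β/Real.log 2 * Q2) := by
      rw [hid]
      have h3 := sub_nonneg.mpr hdagger
      calc (0:ℝ) ≤ 2*D1*X2*P2 - ((P1 - β/Real.log 2 * P2) - (Q1 - β/Real.log 2 * Q2)) := h3
        _ = 2*D1*X2*P2 - (P1 - β/Real.log 2 * P2) + (Q1 - β/Real.log 2 * Q2) := by ring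
    calc (0:ℝ) ≤ E * β * Wb + (Q1 - β/Real.log 2 * Q2) := h2
      _ ≤ E * β * Sb + (Q1 - β/Real.log 2 * Q2) := add_le_add_left hstep1 _

lemma main_case {β x y : ℝ} (hβ1 : 1/2 ≤ β) (hβ2 : β ≤ Real.log 2)
    (hx : 0 < x) (hxy : x < y) (hy : y ≤ 1/2) :
    2 * Blog β ((x+y)/2) ≤ ((y-x) ^ (1/β) + (Blog β x) ^ (1/β)) ^ β + Blog β y := by
  have l2p : (0:ℝ) < Real.log 2 := Real.log_pos one_lt_two
  have l2u : Real.log 2 < 0.6931471808 := Real.log_two_lt_d9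
  have hβ0 : 0 < β := by linarith
  set p : ℝ := 1/β with hp
  have hβp : β * p = 1 := by rw [hp]; field_simp
  have hp1 : 1 ≤ p := by rw [hp, le_div_iff₀ hβ0]; linarith
  have hp0 : 0 < p := by linarith
  set m : ℝ := (x+y)/2 with hm
  set s0 : ℝ := (y-x)/2 with hs0
  have hs00 : 0 < s0 := by rw [hs0]; linarith
  have hm0 : 0 < m := by rw [hm]; linarith
  have hmhalf : m < 1/2 := by rw [hm]; linarith
  -- bounds for points in the interval
  have hxs : ∀ s ∈ Set.Icc (0:ℝ) s0, 0 < m - s ∧ m - s ≤ 1/2 := by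
    intro s hs
    obtain ⟨h1, h2⟩ := hs
    constructor
    · rw [hm]; rw [hs0] at h2; linarith
    · rw [hm]; linarith
  have hys : ∀ s ∈ Set.Icc (0:ℝ) s0, 0 < m + s ∧ m + s ≤ 1/2 := by
    intro s hs
    obtain ⟨h1, h2⟩ := hs
    constructor
    · rw [hm]; linarith
    · rw [hm]; rw [hs0] at h2; linarith
  -- the path function
  set g : ℝ → ℝ := fun s => ((2*s) ^ p + Wf p (m - s)) ^ β + (m+s) * (uu (m+s)) ^ β with hg
  -- continuity
  have hcont : ContinuousOn g (Set.Icc 0 s0) := by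
    rw [hg]
    apply ContinuousOn.add
    · apply ContinuousOn.rpow_const
      · apply ContinuousOn.add
        · exact (continuous_const.mul continuous_id).continuousOn.rpow_const
            (fun s _ => Or.inr hp0.le)
        · unfold Wf
          apply ContinuousOn.mul
          · exact (continuous_const.sub continuous_id).continuousOn.rpow_const
              (fun s hs => Or.inl (ne_of_gt (hxs s hs).1))
          · unfold uu
            apply ContinuousOn.div_const
            apply ContinuousOn.neg
            exact Real.continuousOn_log.comp
              (continuous_const.sub continuous_id).continuousOn
              (fun s hs => ne_of_gt (hxs s hs).1)
      · exact fun s _ => Or.inr hβ0.le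
    · apply ContinuousOn.mul
      · exact (continuous_const.add continuous_id).continuousOn
      · apply ContinuousOn.rpow_const
        · unfold uu
          apply ContinuousOn.div_const
          apply ContinuousOn.neg
          exact Real.continuousOn_log.comp
            (continuous_const.add continuous_id).continuousOn
            (fun s hs => ne_of_gt (hys s hs).1)
        · exact fun s _ => Or.inr hβ0.le
  -- derivative
  have hder : ∀ s ∈ Set.Ioo (0:ℝ) s0, HasDerivAt g
      ((p * (2*s) ^ (p-1) * 2 + (m-s) ^ (p-1) * (p * uu (m-s) - 1/Real.log 2) * (-1)) * β
          * ((2*s) ^ p + Wf p (m-s)) ^ (β-1)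
        + ((uu (m+s)) ^ β - β/Real.log 2 * (uu (m+s)) ^ (β-1))) s := by
    intro s hs
    obtain ⟨hs1, hs2⟩ := hs
    have hmem : s ∈ Set.Icc (0:ℝ) s0 := ⟨hs1.le, hs2.le⟩
    have hxs0 : 0 < m - s := (hxs s hmem).1
    have hys0 : 0 < m + s := (hys s hmem).1
    have hys1 : m + s < 1 := by
      have := (hys s hmem).2; linarith
    have h2s : 0 < 2*s := by linarith
    have hinner1 : HasDerivAt (fun s : ℝ => 2*s) 2 s := by
      simpa using (hasDerivAt_id s).const_mul (2:ℝ)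
    have hinner2 : HasDerivAt (fun s : ℝ => m - s) (-1) s := by
      simpa using (hasDerivAt_id s).const_sub m
    have hinner3 : HasDerivAt (fun s : ℝ => m + s) 1 s := by
      simpa using (hasDerivAt_id s).const_add m
    have h1 : HasDerivAt (fun s : ℝ => (2*s) ^ p) (p * (2*s) ^ (p-1) * 2) s := by
      have houter : HasDerivAt (fun z : ℝ => z ^ p) (p * (2*s) ^ (p-1)) (2*s) :=
        Real.hasDerivAt_rpow_const (Or.inl (ne_of_gt h2s))
      exact houter.comp s hinner1
    have h2 : HasDerivAt (fun s : ℝ => Wf p (m - s))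
        ((m-s) ^ (p-1) * (p * uu (m-s) - 1/Real.log 2) * (-1)) s :=
      (hasDerivAt_Wf hxs0 hp1).comp s hinner2
    have hSpos : 0 < (2*s) ^ p + Wf p (m-s) := by
      have w1 : 0 < (2*s) ^ p := Real.rpow_pos_of_pos h2s p
      have w2 : 0 < Wf p (m-s) := by
        rw [Wf]
        have hu1 : 1 ≤ uu (m-s) := uu_ge_one hxs0 (hxs s hmem).2
        exact mul_pos (Real.rpow_pos_of_pos hxs0 p) (by linarith)
      linarith
    have h3 : HasDerivAt (fun s : ℝ => ((2*s) ^ p + Wf p (m - s)) ^ β)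
        ((p * (2*s) ^ (p-1) * 2 + (m-s) ^ (p-1) * (p * uu (m-s) - 1/Real.log 2) * (-1)) * β
          * ((2*s) ^ p + Wf p (m-s)) ^ (β-1)) s :=
      (h1.add h2).rpow_const (Or.inl (ne_of_gt hSpos))
    have h4 : HasDerivAt (fun s : ℝ => (m+s) * (uu (m+s)) ^ β)
        ((uu (m+s)) ^ β - β/Real.log 2 * (uu (m+s)) ^ (β-1)) s := by
      have := (hasDerivAt_Blog hys0 hys1 hβ0).comp s hinner3
      exact this.congr_deriv (mul_one _)
    exact h3.add h4
  -- monotonicity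
  have hmono : MonotoneOn g (Set.Icc 0 s0) := by
    apply monotoneOn_of_deriv_nonneg (convex_Icc 0 s0) hcont
    · intro s hs
      rw [interior_Icc] at hs
      exact ((hder s hs).differentiableAt).differentiableWithinAt
    · intro s hs
      rw [interior_Icc] at hs
      rw [(hder s hs).deriv]
      -- apply key
      obtain ⟨hs1, hs2⟩ := hs
      have hmem : s ∈ Set.Icc (0:ℝ) s0 := ⟨hs1.le, hs2.le⟩
      have hxs0 : 0 < m - s := (hxs s hmem).1
      have hys2 : (m+s) ≤ 1/2 := (hys s hmem).2
      have hxy2 : m - s < m + s := by linarith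
      have hk := key hβ1 hβ2 hp hxs0 hxy2 hys2 (le_add_of_nonneg_left
        (Real.rpow_nonneg (by linarith : (0:ℝ) ≤ 2*s) p))
      have hyx : (m+s) - (m-s) = 2*s := by ring
      rw [hyx] at hk
      calc (0:ℝ) ≤ (2 * (p * (2*s) ^ (p-1)) - (m-s) ^ (p-1) * (p * uu (m-s) - 1/Real.log 2)) * β
            * ((2*s) ^ p + Wf p (m-s)) ^ (β-1)
          + ((uu (m+s)) ^ β - β/Real.log 2 * (uu (m+s)) ^ (β-1)) := hk
        _ = (p * (2*s) ^ (p-1) * 2 + (m-s) ^ (p-1) * (p * uu (m-s) - 1/Real.log 2) * (-1)) * β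
            * ((2*s) ^ p + Wf p (m-s)) ^ (β-1)
          + ((uu (m+s)) ^ β - β/Real.log 2 * (uu (m+s)) ^ (β-1)) := by ring
  -- endpoints
  have hend := hmono (Set.left_mem_Icc.mpr hs00.le) (Set.right_mem_Icc.mpr hs00.le) hs00.le
  rw [hg] at hend
  simp only at hend
  have humnn : (0:ℝ) ≤ uu m := le_trans zero_le_one (uu_ge_one hm0 hmhalf.le)
  have hg0 : ((2*(0:ℝ)) ^ p + Wf p (m - 0)) ^ β + (m+0) * (uu (m+0)) ^ β = 2 * Blog β m := by
    rw [mul_zero, sub_zero, add_zero, Real.zero_rpow (ne_of_gt hp0), zero_add]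
    rw [Wf, Real.mul_rpow (Real.rpow_nonneg hm0.le p) humnn, ← Real.rpow_mul hm0.le,
      show p * β = 1 by rw [mul_comm]; exact hβp, Real.rpow_one, Blog_u]
    ring
  have e1 : 2*s0 = y - x := by rw [hs0]; ring
  have e2 : m - s0 = x := by rw [hm, hs0]; ring
  have e3 : m + s0 = y := by rw [hm, hs0]; ring
  have huxnn : (0:ℝ) ≤ uu x := le_trans zero_le_one (uu_ge_one hx (by linarith))
  have hWfB : Wf p x = (Blog β x) ^ p := by
    rw [Blog_u, Real.mul_rpow hx.le (Real.rpow_nonneg huxnn β), ← Real.rpow_mul huxnn,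
      hβp, Real.rpow_one, Wf]
  have hgs0 : ((2*s0) ^ p + Wf p (m - s0)) ^ β + (m+s0) * (uu (m+s0)) ^ β
      = ((y-x) ^ p + (Blog β x) ^ p) ^ β + Blog β y := by
    rw [e1, e2, e3, ← Blog_u, hWfB]
  rw [hg0, hgs0] at hend
  exact hend

end TwoPointAux

open TwoPointAux Real

/-- Lemma for sets of large measure: for `β ∈ [1/2, ln 2]` and
`0 ≤ x ≤ y ≤ 1/2`, `((y−x)^{1/β} + B(x)^{1/β})^β + B(y) ≥ 2 B((x+y)/2)`. -/
theorem two_point_log_swapped (β : ℝ) (hβ : β ∈ Set.Icc (1 / 2 : ℝ) (Real.log 2))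
    (x y : ℝ) (hx : 0 ≤ x) (hxy : x ≤ y) (hy : y ≤ 1 / 2) :
    ((y - x) ^ (1 / β) + (Blog β x) ^ (1 / β)) ^ β + Blog β y ≥ 2 * Blog β ((x + y) / 2) := by
  obtain ⟨hβ1, hβ2⟩ := hβ
  have l2p : (0:ℝ) < Real.log 2 := Real.log_pos one_lt_two
  have l2u : Real.log 2 < 0.6931471808 := Real.log_two_lt_d9
  have hβ0 : 0 < β := by linarith
  have hβne : β ≠ 0 := ne_of_gt hβ0
  have hβlt1 : β < 1 := by linarith
  have hpne : 1/β ≠ 0 := by positivity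
  rw [ge_iff_le]
  rcases eq_or_lt_of_le hx with hx0 | hx0
  · -- x = 0
    rw [← hx0]
    rcases eq_or_lt_of_le (hx0 ▸ hxy : (0:ℝ) ≤ y) with hy0 | hy0
    · rw [← hy0]
      have hB0 : Blog β 0 = 0 := by simp [Blog]
      rw [show ((0:ℝ)+0)/2 = 0 by norm_num, hB0, mul_zero, sub_zero, Real.zero_rpow hpne,
        add_zero, add_zero, Real.zero_rpow hβne]
    · -- 0 < y
      have hB0 : Blog β 0 = 0 := by simp [Blog]
      rw [hB0, Real.zero_rpow hpne, sub_zero, add_zero, zero_add]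
      have hyβ : (y ^ (1/β)) ^ β = y := by
        rw [← Real.rpow_mul hy0.le]
        rw [show 1/β * β = 1 by field_simp, Real.rpow_one]
      rw [hyβ]
      have hhalf : Blog β (y/2) = (y/2) * (uu y + 1) ^ β := by
        rw [Blog_u]
        congr 2
        rw [uu, uu, show Real.log (y/2) = Real.log y - Real.log 2 by
          rw [Real.log_div (ne_of_gt hy0) (by norm_num)]]
        field_simp
        ring
      have huy : (0:ℝ) ≤ uu y := le_trans zero_le_one (uu_ge_one hy0 hy)
      have hsub : (uu y + 1) ^ β ≤ (uu y) ^ β + 1 := add_one_rpow_le huy hβ0.le hβlt1.le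
      have h2B : 2 * Blog β (y/2) = y * (uu y + 1) ^ β := by
        rw [hhalf]; ring
      rw [h2B, Blog_u]
      calc y * (uu y + 1) ^ β ≤ y * ((uu y) ^ β + 1) :=
            mul_le_mul_of_nonneg_left hsub hy0.le
        _ = y + y * (uu y) ^ β := by ring
  · rcases eq_or_lt_of_le hxy with hxy0 | hxy0
    · -- x = y
      rw [hxy0, sub_self, Real.zero_rpow hpne, zero_add]
      have hBy : 0 ≤ Blog β y := Blog_nonneg (by linarith) hy hβne
      have hyβ : ((Blog β y) ^ (1/β)) ^ β = Blog β y := by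
        rw [← Real.rpow_mul hBy, show 1/β * β = 1 by field_simp, Real.rpow_one]
      rw [hyβ, show (y+y)/2 = y by ring]
      linarith only []
    · exact main_case hβ1 hβ2 hx0 hxy0 hy
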